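/- Let δ ∈ S* ∪ {λ} and let p, q ∈ Q_δ be conditions with the same trunk, say p = p*_{η,δ,S₁} and q = p*_{η,δ,S₂}. Then p ∩ q = p*_{η,δ,S₁∪S₂} ∈ Q_δ, and p ∩ q is the least upper bound of p and q in Q_δ. -/

import Mathlib

open Set Ordinal

namespace RRF

/-- `C` is a closed unbounded (club) subset of the ordinal `δ`. -/
def ClubIn (C : Set Ordinal) (δ : Ordinal) : Prop :=
  (∀ α < δ, ∃ β ∈ C, α < β ∧ β < δ) ∧
  (∀ α, 0 < α → α < δ → (∀ β < α, ∃ γ ∈ C, β < γ ∧ γ < α) → α ∈ C)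

/-- `S` is stationary in `δ`: it meets every club of `δ`. -/
def StatIn (S : Set Ordinal) (δ : Ordinal) : Prop :=
  ∀ C, ClubIn C δ → (S ∩ C).Nonempty

/-- `S` is tenuous (nowhere stationary): for every ordinal `δ` of
uncountable cofinality, `S ∩ δ` is not stationary in `δ`. -/
def Tenuous (S : Set Ordinal) : Prop :=
  ∀ δ : Ordinal, Cardinal.aleph0 < δ.cof → ¬ StatIn (S ∩ Iio δ) δ

end RRF

namespace RRF

/-- A node: a padded sequence of ordinals, given by its length together with a
function which is `0` from the length onwards. -/
abbrev Node : Type 1 := Ordinal × (Ordinal → Ordinal)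

namespace Node

/-- The length of a node. -/
def lg (η : Node) : Ordinal := η.1

/-- Restriction of a node to length `β`. -/
noncomputable def restrict (η : Node) (β : Ordinal) : Node :=
  (min β η.1, fun ε => if ε < min β η.1 then η.2 ε else 0)

/-- `η ⊴ ν` : `η` is an initial segment of `ν`. -/
def Below (η ν : Node) : Prop := η.1 ≤ ν.1 ∧ ∀ ε < η.1, η.2 ε = ν.2 ε

/-- The empty sequence. -/
def emptyNode : Node := (0, fun _ => 0)

/-- `η⌢⟨j⟩` : the immediate successor of `η` with last value `j`. -/
noncomputable def ext (η : Node) (j : Ordinal) : Node :=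
  (η.1 + 1, fun ε => if ε < η.1 then η.2 ε else if ε = η.1 then j else 0)

end Node

/-- `η` is a genuine (padded) sequence with `η(ε) < θ ε` for `ε < lg η`. -/
def IsSeq (θ : Ordinal → Cardinal) (η : Node) : Prop :=
  (∀ ε < η.1, η.2 ε < (θ ε).ord) ∧ ∀ ε, ¬ ε < η.1 → η.2 ε = 0

/-- `T_{<δ}` : the full tree of sequences of length `< δ`. -/
def Ttree (θ : Ordinal → Cardinal) (δ : Ordinal) : Set Node :=
  {η | η.1 < δ ∧ IsSeq θ η}

/-- `T_ε` : the `ε`-th level of the full tree. -/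
def Level (θ : Ordinal → Cardinal) (ε : Ordinal) : Set Node :=
  {η | η.1 = ε ∧ IsSeq θ η}

/-- `lim_δ(u)` : length-`δ` sequences all of whose proper restrictions lie in `u`. -/
def limNodes (θ : Ordinal → Cardinal) (δ : Ordinal) (u : Set Node) : Set Node :=
  {ν | ν.1 = δ ∧ IsSeq θ ν ∧ ∀ β < δ, ν.restrict β ∈ u}

end RRF

namespace RRF

/-- `p^{[η]}` : the nodes of `p` comparable with `η` which extend `η` or are
initial segments of it. -/
def restrTree (p : Set Node) (η : Node) : Set Node :=
  {ρ ∈ p | Node.Below η ρ ∨ Node.Below ρ η}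

/-- `η` is the trunk of `p` : it is comparable with every node of `p` and is
`⊴`-maximal with this property. -/
def IsTrunk (p : Set Node) (η : Node) : Prop :=
  η ∈ p ∧ (∀ ν ∈ p, Node.Below ν η ∨ Node.Below η ν) ∧
    ∀ η' ∈ p, (∀ ν ∈ p, Node.Below ν η' ∨ Node.Below η' ν) → Node.Below η' η

/-- `p` is a tree: nonempty and closed under restrictions. -/
def IsTree (p : Set Node) : Prop :=
  p.Nonempty ∧ ∀ η ∈ p, ∀ β ≤ η.1, η.restrict β ∈ p

/-- `S_p` : the set of pruning levels of `p` below `δ` — limit levels `δ₁ < δ`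
at which some node has all proper restrictions in `p` but is itself not in `p`. -/
def pruneSet (θ : Ordinal → Cardinal) (δ : Ordinal) (p : Set Node) : Set Ordinal :=
  {δ₁ | δ₁ < δ ∧ Order.IsSuccLimit δ₁ ∧ ∃ η ∈ Level θ δ₁, η ∉ p ∧ ∀ β < δ₁, η.restrict β ∈ p}

/-- `p` is a condition of the forcing `Q⁰_δ`. -/
structure IsCond0 (θ : Ordinal → Cardinal) (Sstar : Set Ordinal) (δ : Ordinal)
    (p : Set Node) : Prop where
  subset : p ⊆ Ttree θ δ
  tree : IsTree p
  trunk : ∃ η, IsTrunk p η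
  levels : ∀ η ∈ p, ∀ β, η.1 ≤ β → β < δ → ∃ ν ∈ p, ν.1 = β ∧ Node.Below η ν
  branches : ∀ η ∈ p, ∃ ν ∈ limNodes θ δ p, Node.Below η ν
  fullSucc : ∀ t, IsTrunk p t → ∀ η ∈ p, Node.Below t η →
      ∀ j < ((θ η.1).ord), η.ext j ∈ p
  pruneSub : pruneSet θ δ p ⊆ Sstar
  pruneTen : Tenuous (pruneSet θ δ p)
  pruneGt : ∀ t, IsTrunk p t → ∀ δ₁ ∈ pruneSet θ δ p, t.1 < δ₁

/-- Compatibility in `Q⁰_δ` (order is reverse inclusion). -/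
def Compat0 (θ : Ordinal → Cardinal) (Sstar : Set Ordinal) (δ : Ordinal)
    (p q : Set Node) : Prop :=
  ∃ r, IsCond0 θ Sstar δ r ∧ r ⊆ p ∧ r ⊆ q

/-- Membership in `Ξ_δ` for a family `⟨q_η : η ∈ Λ⟩`. -/
structure IsXi (θ : Ordinal → Cardinal) (Sstar : Set Ordinal) (δ : Ordinal)
    (Λ : Set Node) (q : Node → Set Node) : Prop where
  sub : Λ ⊆ Ttree θ δ
  cond : ∀ η ∈ Λ, IsCond0 θ Sstar δ (q η)
  trunk : ∀ η ∈ Λ, IsTrunk (q η) η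
  anti : ∀ η ∈ Λ, ∀ ν ∈ Λ, η ≠ ν → η ∉ q ν ∨ ν ∉ q η
  union : IsCond0 θ Sstar δ (⋃ η ∈ Λ, q η)

/-- The coder of `⟨q_η : η ∈ Λ⟩`. -/
def coder (Λ : Set Node) (q : Node → Set Node) : Set (Node × Node) :=
  {x | x.1 ∈ Λ ∧ x.2 ∈ q x.1}

end RRF

namespace RRF

-- The recursively defined condition `p*_{η,δ,S}`, relative to abstract
-- "successful level" data `succl`, `rst` (= `r*_δ`), `Λst` (= `Λ*_δ`) and
-- `qst` (= `⟨q*_{δ,η'}⟩`).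
open Classical in
noncomputable def pstar (θ : Ordinal → Cardinal) (succl : Ordinal → Prop)
    (rst : Ordinal → Set Node) (Λst : Ordinal → Set Node)
    (qst : Ordinal → Node → Set Node) :
    Ordinal → Node → Set Ordinal → Set Node :=
  WellFounded.fix (wellFounded_lt)
    (fun δ rec η S =>
      if sSup S ≤ η.1 then
        -- case (a): `(T_{<δ})^{[η]}`
        restrTree (Ttree θ δ) η
      else if _hmem : sSup S ∈ S then
        if hlt : sSup S < δ then
          if succl (sSup S) then
            -- case (d): last element `δ₁ = sSup S` is successful
            {ν ∈ Ttree θ δ |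
              (ν.1 < sSup S ∧ ν ∈ rec (sSup S) hlt η (S ∩ Set.Iio (sSup S))) ∨
              (sSup S ≤ ν.1 ∧
                ν.restrict (sSup S) ∈
                  limNodes θ (sSup S) (rec (sSup S) hlt η (S ∩ Set.Iio (sSup S))) ∧
                (ν.restrict (sSup S) ∈ limNodes θ (sSup S) (rst (sSup S)) →
                  ∃ η' ∈ Λst (sSup S),
                    ν.restrict (sSup S) ∈ limNodes θ (sSup S) (qst (sSup S) η')))}
          else
            -- case (c): last element `δ₁ = sSup S` is not successful
            {ν ∈ Ttree θ δ |
              (ν.1 < sSup S ∧ ν ∈ rec (sSup S) hlt η (S ∩ Set.Iio (sSup S))) ∨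
              (sSup S ≤ ν.1 ∧
                ν.restrict (sSup S) ∈
                  limNodes θ (sSup S) (rec (sSup S) hlt η (S ∩ Set.Iio (sSup S))))}
        else ∅
      else
        -- case (b): `S` unbounded above `lg η` with no last element
        {ν ∈ Ttree θ δ |
          Node.Below ν η ∨
          (Node.Below η ν ∧
            ((∃ δ₁, ∃ h : δ₁ < δ, δ₁ ∈ S ∧ ν.1 < δ₁ ∧
                ν ∈ rec δ₁ h η (S ∩ Set.Iio δ₁)) ∨
             (sSup S ≤ ν.1 ∧ ∀ δ₁, ∀ h : δ₁ < δ, δ₁ ∈ S → η.1 < δ₁ →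
                ∀ ζ < δ₁, ν.restrict ζ ∈ rec δ₁ h η (S ∩ Set.Iio δ₁))))})

/-- Membership in the main forcing `Q_δ`. -/
def IsCondQ (θ : Ordinal → Cardinal) (succl : Ordinal → Prop)
    (rst Λst : Ordinal → Set Node) (qst : Ordinal → Node → Set Node)
    (Sstar : Set Ordinal) (δ : Ordinal) (p : Set Node) : Prop :=
  ∃ η ∈ Ttree θ δ, ∃ S, S ⊆ Sstar ∩ Set.Iio δ ∧ Tenuous S ∧
    p = pstar θ succl rst Λst qst δ η S

/-- Membership in the forcing `Q'_δ`. -/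
def IsCondQ' (θ : Ordinal → Cardinal) (succl : Ordinal → Prop)
    (rst Λst : Ordinal → Set Node) (qst : Ordinal → Node → Set Node)
    (Sstar : Set Ordinal) (δ : Ordinal) (p : Set Node) : Prop :=
  IsCond0 θ Sstar δ p ∧
  ∀ δ₁ ∈ Sstar, δ₁ < δ → (∀ t, IsTrunk p t → t.1 < δ₁) →
    IsCondQ θ succl rst Λst qst Sstar δ₁ (p ∩ Ttree θ δ₁)

end RRF

/-!
Unwinding the recursion, `ν ∈ p*_{η,δ,S}` iff `ν ∈ T_{<δ}` is comparable with `η` and for every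
`δ₁ ∈ S` above `lg η` the restriction `ν ↾ δ₁` meets the requirement of a successful level `δ₁`
(a branch of `r*_{δ₁}` must be a branch of some `q*_{δ₁,η'}`). This closed form is proved by
induction on `δ`, one case for each clause of the recursion. Being a conjunction over `δ₁ ∈ S`, it
turns `S₁ ∪ S₂` into the intersection of the two conditions. Finally `S₁ ∪ S₂` is again tenuous,
since two clubs of an ordinal of uncountable cofinality meet in a club.
-/

namespace RRF

namespace Node

theorem restrict_snd_of_lt {ν : Node} {β ε : Ordinal} (h : ε < min β ν.1) :
    (ν.restrict β).2 ε = ν.2 ε := if_pos h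

theorem restrict_restrict (ν : Node) {β ζ : Ordinal} (h : ζ ≤ β) :
    (ν.restrict β).restrict ζ = ν.restrict ζ := by
  have hmin : min ζ (min β ν.1) = min ζ ν.1 := by rw [← min_assoc, min_eq_left h]
  refine Prod.ext hmin (funext fun ε => ?_)
  simp only [restrict, hmin]
  by_cases hε : ε < min ζ ν.1
  · simp only [hε, hε.trans_le (min_le_min_right _ h), if_true]
  · simp only [hε, if_false]

theorem below_restrict_iff {η ν : Node} {ζ : Ordinal} (h : η.1 ≤ ζ) :
    Below η (ν.restrict ζ) ↔ Below η ν := by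
  refine ⟨fun ⟨hl, hv⟩ => ⟨hl.trans (min_le_right _ _), fun ε hε => ?_⟩,
    fun ⟨hl, hv⟩ => ⟨le_min h hl, fun ε hε => ?_⟩⟩
  · rw [hv ε hε, restrict_snd_of_lt (hε.trans_le hl)]
  · rw [hv ε hε, restrict_snd_of_lt (hε.trans_le (le_min h hl))]

theorem Below.restrict_below {η ν : Node} (h : Below η ν) {ζ : Ordinal} (hζ : ζ ≤ η.1) :
    Below (ν.restrict ζ) η := by
  refine ⟨(min_le_left _ _).trans hζ, fun ε hε => ?_⟩
  rw [restrict_snd_of_lt hε]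
  exact (h.2 ε (hε.trans_le ((min_le_left _ _).trans hζ))).symm

theorem Below.of_fst_le {ρ η : Node} (h : Below ρ η) (hle : η.1 ≤ ρ.1) : Below η ρ :=
  ⟨hle, fun ε hε => (h.2 ε (hε.trans_le hle)).symm⟩

theorem below_or_below_iff {η ν : Node} (h : η.1 < ν.1) : (Below ν η ∨ Below η ν) ↔ Below η ν :=
  or_iff_right fun h' => (h.trans_le h'.1).false

end Node

theorem IsSeq.restrict {θ : Ordinal → Cardinal} {ν : Node} (hν : IsSeq θ ν) (β : Ordinal) :
    IsSeq θ (ν.restrict β) := by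
  refine ⟨fun ε hε => ?_, fun ε hε => if_neg hε⟩
  rw [Node.restrict_snd_of_lt hε]
  exact hν.1 ε (hε.trans_le (min_le_right _ _))

theorem restrict_mem_limNodes_iff {θ : Ordinal → Cardinal} {ν : Node} {α : Ordinal}
    (hν : IsSeq θ ν) (hα : α ≤ ν.1) {u : Set Node} :
    ν.restrict α ∈ limNodes θ α u ↔ ∀ ζ < α, ν.restrict ζ ∈ u := by
  refine ⟨fun h ζ hζ => ?_, fun h => ⟨min_eq_left hα, hν.restrict α, fun ζ hζ => ?_⟩⟩
  · simpa only [ν.restrict_restrict hζ.le] using h.2.2 ζ hζ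
  · simpa only [ν.restrict_restrict hζ.le] using h ζ hζ

theorem insert_csSup_inter_Iio {S : Set Ordinal} (hbdd : BddAbove S) (hmem : sSup S ∈ S) :
    insert (sSup S) (S ∩ Iio (sSup S)) = S := by
  ext x
  refine ⟨?_, fun hx => (le_csSup hbdd hx).eq_or_lt.imp id fun h => ⟨hx, h⟩⟩
  rintro (rfl | hx)
  exacts [hmem, hx.1]

section Pstar

variable (θ : Ordinal → Cardinal) (succl : Ordinal → Prop)
  (rst Λst : Ordinal → Set Node) (qst : Ordinal → Node → Set Node)

def PassesLevel (δ₁ : Ordinal) (ρ : Node) : Prop :=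
  succl δ₁ → ρ ∈ limNodes θ δ₁ (rst δ₁) → ∃ η' ∈ Λst δ₁, ρ ∈ limNodes θ δ₁ (qst δ₁ η')

def PassesLevels (S : Set Ordinal) (η ν : Node) : Prop :=
  ∀ δ₁ ∈ S, η.1 < δ₁ → PassesLevel θ succl rst Λst qst δ₁ (ν.restrict δ₁)

/-- A node shorter than `δ₁` passes level `δ₁` vacuously, as it is not in `limNodes θ δ₁ _`;
hence no condition relating `δ₁` to `lg ν` is needed. -/
def pstarSet (δ : Ordinal) (η : Node) (S : Set Ordinal) : Set Node :=
  {ν ∈ Ttree θ δ | (Node.Below ν η ∨ Node.Below η ν) ∧ PassesLevels θ succl rst Λst qst S η ν}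

variable {θ succl rst Λst qst} {δ α : Ordinal} {η ν : Node} {S T : Set Ordinal}

theorem pstar_of_sSup_le (h : sSup S ≤ η.1) :
    pstar θ succl rst Λst qst δ η S = restrTree (Ttree θ δ) η := by
  rw [pstar, WellFounded.fix_eq, if_pos h]

/-- Cases (c) and (d) of the recursion at once: `PassesLevel` is vacuous at unsuccessful levels. -/
theorem pstar_of_sSup_mem (hη : η.1 < sSup S) (hmem : sSup S ∈ S) (hδ : sSup S < δ) :
    pstar θ succl rst Λst qst δ η S =
      {ν ∈ Ttree θ δ |
        (ν.1 < sSup S ∧ ν ∈ pstar θ succl rst Λst qst (sSup S) η (S ∩ Iio (sSup S))) ∨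
        (sSup S ≤ ν.1 ∧
          ν.restrict (sSup S) ∈
            limNodes θ (sSup S) (pstar θ succl rst Λst qst (sSup S) η (S ∩ Iio (sSup S))) ∧
          PassesLevel θ succl rst Λst qst (sSup S) (ν.restrict (sSup S)))} := by
  conv_lhs => rw [pstar, WellFounded.fix_eq, if_neg hη.not_ge, dif_pos hmem, dif_pos hδ]
  split_ifs with hs <;> simp only [PassesLevel, hs, true_imp_iff, false_imp_iff, and_true] <;> rfl

theorem pstar_of_sSup_not_mem (hS : S ⊆ Iio δ) (hη : η.1 < sSup S) (hmem : sSup S ∉ S) :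
    pstar θ succl rst Λst qst δ η S =
      {ν ∈ Ttree θ δ | Node.Below ν η ∨ (Node.Below η ν ∧
        ((∃ δ₁ ∈ S, ν.1 < δ₁ ∧ ν ∈ pstar θ succl rst Λst qst δ₁ η (S ∩ Iio δ₁)) ∨
         (sSup S ≤ ν.1 ∧ ∀ δ₁ ∈ S, η.1 < δ₁ →
            ∀ ζ < δ₁, ν.restrict ζ ∈ pstar θ succl rst Λst qst δ₁ η (S ∩ Iio δ₁))))} := by
  conv_lhs => rw [pstar, WellFounded.fix_eq, if_neg hη.not_ge, dif_neg hmem]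
  ext ν
  refine and_congr_right fun _ => or_congr_right (and_congr_right fun _ => or_congr ?_ ?_)
  · exact ⟨fun ⟨δ₁, _, h⟩ => ⟨δ₁, h⟩, fun ⟨δ₁, h⟩ => ⟨δ₁, hS h.1, h⟩⟩
  · exact and_congr_right fun _ => ⟨fun h δ₁ h₁ => h δ₁ (hS h₁) h₁, fun h δ₁ _ => h δ₁⟩

theorem passesLevel_of_fst_ne {δ₁ : Ordinal} {ρ : Node} (h : ρ.1 ≠ δ₁) :
    PassesLevel θ succl rst Λst qst δ₁ ρ :=
  fun _ hρ => absurd hρ.1 h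

theorem passesLevels_of_fst_le (h : ν.1 ≤ η.1) : PassesLevels θ succl rst Λst qst S η ν :=
  fun _ _ hη => passesLevel_of_fst_ne ((min_le_right _ _).trans_lt (h.trans_lt hη)).ne

theorem PassesLevels.mono (h : PassesLevels θ succl rst Λst qst S η ν) (hTS : T ⊆ S) :
    PassesLevels θ succl rst Λst qst T η ν :=
  fun δ₁ hδ₁ => h δ₁ (hTS hδ₁)

theorem passesLevels_union :
    PassesLevels θ succl rst Λst qst (S ∪ T) η ν ↔
      PassesLevels θ succl rst Λst qst S η ν ∧ PassesLevels θ succl rst Λst qst T η ν := by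
  simp only [PassesLevels, mem_union, or_imp, forall_and]

theorem passesLevels_insert {s : Ordinal} :
    PassesLevels θ succl rst Λst qst (insert s S) η ν ↔
      (η.1 < s → PassesLevel θ succl rst Λst qst s (ν.restrict s)) ∧
        PassesLevels θ succl rst Λst qst S η ν :=
  forall_mem_insert

theorem passesLevels_iff_of_csSup_mem (hbdd : BddAbove S) (hmem : sSup S ∈ S) :
    PassesLevels θ succl rst Λst qst S η ν ↔
      (η.1 < sSup S → PassesLevel θ succl rst Λst qst (sSup S) (ν.restrict (sSup S))) ∧
        PassesLevels θ succl rst Λst qst (S ∩ Iio (sSup S)) η ν := by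
  conv_lhs => rw [← insert_csSup_inter_Iio hbdd hmem]
  exact passesLevels_insert

theorem passesLevels_restrict {ζ : Ordinal} :
    PassesLevels θ succl rst Λst qst S η (ν.restrict ζ) ↔
      PassesLevels θ succl rst Λst qst (S ∩ Iic ζ) η ν := by
  refine ⟨fun h δ₁ hδ₁ hη => ?_, fun h δ₁ hδ₁ hη => ?_⟩
  · rw [← ν.restrict_restrict hδ₁.2]
    exact h δ₁ hδ₁.1 hη
  · rcases le_or_gt δ₁ ζ with hle | hlt
    · rw [ν.restrict_restrict hle]
      exact h δ₁ ⟨hδ₁, hle⟩ hη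
    · exact passesLevel_of_fst_ne
        ((min_le_right _ _).trans_lt ((min_le_left _ _).trans_lt hlt)).ne

theorem passesLevels_inter_Iio (h : ν.1 < α) :
    PassesLevels θ succl rst Λst qst (S ∩ Iio α) η ν ↔ PassesLevels θ succl rst Λst qst S η ν := by
  refine ⟨fun hp δ₁ hδ₁ hη => ?_, fun hp => hp.mono inter_subset_left⟩
  rcases lt_or_ge δ₁ α with hlt | hle
  · exact hp δ₁ ⟨hδ₁, hlt⟩ hη
  · exact passesLevel_of_fst_ne ((min_le_right _ _).trans_lt (h.trans_le hle)).ne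

theorem passesLevels_iff_forall_inter_Iio (hS : ∀ x ∈ S, ∃ y ∈ S, x < y) :
    PassesLevels θ succl rst Λst qst S η ν ↔
      ∀ δ₁ ∈ S, η.1 < δ₁ → PassesLevels θ succl rst Λst qst (S ∩ Iio δ₁) η ν := by
  refine ⟨fun hp _ _ _ => hp.mono inter_subset_left, fun hp δ₂ hδ₂ hη => ?_⟩
  obtain ⟨δ₁, hδ₁, hlt⟩ := hS δ₂ hδ₂
  exact hp δ₁ hδ₁ (hη.trans hlt) δ₂ ⟨hδ₂, hlt⟩ hη

theorem pstarSet_union :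
    pstarSet θ succl rst Λst qst δ η (S ∪ T) =
      pstarSet θ succl rst Λst qst δ η S ∩ pstarSet θ succl rst Λst qst δ η T := by
  ext ν
  simp only [pstarSet, mem_inter_iff, mem_sep_iff, passesLevels_union]
  tauto

theorem mem_pstarSet_inter_Iio_iff (hν : IsSeq θ ν) (h : ν.1 < α) :
    ν ∈ pstarSet θ succl rst Λst qst α η (S ∩ Iio α) ↔
      (Node.Below ν η ∨ Node.Below η ν) ∧ PassesLevels θ succl rst Λst qst S η ν := by
  simp only [pstarSet, mem_sep_iff, passesLevels_inter_Iio h]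
  exact and_iff_right ⟨h, hν⟩

theorem forall_restrict_mem_pstarSet_iff (hν : IsSeq θ ν) (hηα : η.1 < α) (hαν : α ≤ ν.1) :
    (∀ ζ < α, ν.restrict ζ ∈ pstarSet θ succl rst Λst qst α η (S ∩ Iio α)) ↔
      Node.Below η ν ∧ PassesLevels θ succl rst Λst qst (S ∩ Iio α) η ν := by
  constructor
  · intro h
    refine ⟨?_, fun δ₁ hδ₁ hη => ?_⟩
    · have hlen : (ν.restrict η.1).1 = η.1 := min_eq_left (hηα.le.trans hαν)
      rw [← Node.below_restrict_iff (le_refl η.1)]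
      exact (h η.1 hηα).2.1.elim (fun hb => hb.of_fst_le hlen.ge) id
    · exact passesLevels_restrict.1 (h δ₁ hδ₁.2).2.2 δ₁ ⟨hδ₁, le_refl δ₁⟩ hη
  · rintro ⟨hην, hp⟩ ζ hζ
    refine ⟨⟨(min_le_left _ _).trans_lt hζ, hν.restrict ζ⟩, ?_,
      passesLevels_restrict.2 (hp.mono inter_subset_left)⟩
    rcases le_total ζ η.1 with hle | hle
    · exact Or.inl (hην.restrict_below hle)
    · exact Or.inr ((Node.below_restrict_iff hle).2 hην)

theorem pstarSet_of_sSup_le (hbdd : BddAbove S) (h : sSup S ≤ η.1) :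
    pstarSet θ succl rst Λst qst δ η S = restrTree (Ttree θ δ) η := by
  ext ν
  refine and_congr_right fun _ => ?_
  rw [or_comm, and_iff_left_iff_imp]
  exact fun _ δ₁ hδ₁ hη => absurd ((le_csSup hbdd hδ₁).trans h) hη.not_ge

theorem pstarSet_of_sSup_mem (hbdd : BddAbove S) (hmem : sSup S ∈ S) (hη : η.1 < sSup S) :
    pstarSet θ succl rst Λst qst δ η S =
      {ν ∈ Ttree θ δ |
        (ν.1 < sSup S ∧ ν ∈ pstarSet θ succl rst Λst qst (sSup S) η (S ∩ Iio (sSup S))) ∨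
        (sSup S ≤ ν.1 ∧
          ν.restrict (sSup S) ∈
            limNodes θ (sSup S) (pstarSet θ succl rst Λst qst (sSup S) η (S ∩ Iio (sSup S))) ∧
          PassesLevel θ succl rst Λst qst (sSup S) (ν.restrict (sSup S)))} := by
  ext ν
  refine and_congr_right fun hν => ?_
  rcases lt_or_ge ν.1 (sSup S) with hlt | hle
  · rw [mem_pstarSet_inter_Iio_iff hν.2 hlt]
    simp only [hlt, true_and, hlt.not_ge, false_and, or_false]
  · rw [restrict_mem_limNodes_iff hν.2 hle, forall_restrict_mem_pstarSet_iff hν.2 hη hle,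
      Node.below_or_below_iff (hη.trans_le hle), passesLevels_iff_of_csSup_mem hbdd hmem]
    simp only [hle.not_gt, false_and, false_or, hle, true_and, hη, true_imp_iff]
    tauto

theorem pstarSet_of_sSup_not_mem (hbdd : BddAbove S) (hmem : sSup S ∉ S) :
    pstarSet θ succl rst Λst qst δ η S =
      {ν ∈ Ttree θ δ | Node.Below ν η ∨ (Node.Below η ν ∧
        ((∃ δ₁ ∈ S, ν.1 < δ₁ ∧ ν ∈ pstarSet θ succl rst Λst qst δ₁ η (S ∩ Iio δ₁)) ∨
         (sSup S ≤ ν.1 ∧ ∀ δ₁ ∈ S, η.1 < δ₁ →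
            ∀ ζ < δ₁, ν.restrict ζ ∈ pstarSet θ succl rst Λst qst δ₁ η (S ∩ Iio δ₁))))} := by
  have hlt_sup : ∀ x ∈ S, x < sSup S := fun x hx =>
    (le_csSup hbdd hx).lt_of_ne fun h => hmem (h ▸ hx)
  ext ν
  refine and_congr_right fun hν => ?_
  by_cases hνη : Node.Below ν η
  · exact iff_of_true ⟨Or.inl hνη, passesLevels_of_fst_le hνη.1⟩ (Or.inl hνη)
  simp only [hνη, false_or]
  refine and_congr_right fun hην => ?_
  rcases lt_or_ge ν.1 (sSup S) with hlt | hle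
  · rw [or_iff_left fun h => hlt.not_ge h.1]
    constructor
    · intro hp
      obtain ⟨δ₁, hδ₁, hνδ₁⟩ := exists_lt_of_lt_csSup' hlt
      exact ⟨δ₁, hδ₁, hνδ₁, (mem_pstarSet_inter_Iio_iff hν.2 hνδ₁).2 ⟨Or.inr hην, hp⟩⟩
    · rintro ⟨δ₁, -, hνδ₁, hνp⟩
      exact ((mem_pstarSet_inter_Iio_iff hν.2 hνδ₁).1 hνp).2
  · rw [or_iff_right fun ⟨δ₁, hδ₁, hνδ₁, _⟩ => (hle.trans_lt hνδ₁).not_ge (le_csSup hbdd hδ₁),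
      and_iff_right hle,
      passesLevels_iff_forall_inter_Iio fun x hx => exists_lt_of_lt_csSup' (hlt_sup x hx)]
    refine forall₂_congr fun δ₁ hδ₁ => imp_congr_right fun hη => ?_
    rw [forall_restrict_mem_pstarSet_iff hν.2 hη ((le_csSup hbdd hδ₁).trans hle),
      and_iff_right hην]

theorem pstar_eq_pstarSet (hS : S ⊆ Iio δ) :
    pstar θ succl rst Λst qst δ η S = pstarSet θ succl rst Λst qst δ η S := by
  induction δ using WellFoundedLT.induction generalizing S with
  | ind δ IH =>
  have hbdd : BddAbove S := ⟨δ, fun x hx => (hS hx).le⟩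
  have IH' : ∀ δ₁ ∈ S, pstar θ succl rst Λst qst δ₁ η (S ∩ Iio δ₁) =
      pstarSet θ succl rst Λst qst δ₁ η (S ∩ Iio δ₁) :=
    fun δ₁ hδ₁ => IH δ₁ (hS hδ₁) inter_subset_right
  rcases le_or_gt (sSup S) η.1 with hle | hη
  · rw [pstar_of_sSup_le hle, pstarSet_of_sSup_le hbdd hle]
  by_cases hmem : sSup S ∈ S
  · rw [pstar_of_sSup_mem hη hmem (hS hmem), pstarSet_of_sSup_mem hbdd hmem hη, IH' _ hmem]
  · rw [pstar_of_sSup_not_mem hS hη hmem, pstarSet_of_sSup_not_mem hbdd hmem]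
    ext ν
    refine and_congr_right fun _ => or_congr_right (and_congr_right fun _ => or_congr ?_ ?_)
    · exact exists_congr fun δ₁ => and_congr_right fun hδ₁ => by rw [IH' δ₁ hδ₁]
    · exact and_congr_right fun _ => forall₂_congr fun δ₁ hδ₁ => by rw [IH' δ₁ hδ₁]

theorem pstar_inter_pstar {S₁ S₂ : Set Ordinal} (h₁ : S₁ ⊆ Iio δ) (h₂ : S₂ ⊆ Iio δ) :
    pstar θ succl rst Λst qst δ η S₁ ∩ pstar θ succl rst Λst qst δ η S₂ =
      pstar θ succl rst Λst qst δ η (S₁ ∪ S₂) := by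
  rw [pstar_eq_pstarSet h₁, pstar_eq_pstarSet h₂, pstar_eq_pstarSet (union_subset h₁ h₂),
    pstarSet_union]

end Pstar

theorem ClubIn.isClub {C : Set Ordinal} {δ : Ordinal} (h : ClubIn C δ) :
    IsClub {x : Iio δ | x.1 ∈ C} := by
  refine ⟨fun d hdC ⟨x, hx⟩ _ a ha => ?_, fun x => ?_⟩
  · by_cases had : a ∈ d
    · exact hdC had
    have hlt : ∀ y ∈ d, y < a := fun y hy => (ha.1 hy).lt_of_ne fun h => had (h ▸ hy)
    refine h.2 a.1 ((zero_le (a := x.1)).trans_lt (hlt x hx)) a.2 fun β hβ => ?_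
    have hβub : (⟨β, hβ.trans a.2⟩ : Iio δ) ∉ upperBounds d := fun hub => (ha.2 hub).not_gt hβ
    simp only [mem_upperBounds, not_forall, not_le, exists_prop] at hβub
    obtain ⟨y, hy, hβy⟩ := hβub
    exact ⟨y.1, hdC hy, hβy, hlt y hy⟩
  · obtain ⟨β, hβC, hxβ, hβδ⟩ := h.1 x.1 x.2
    exact ⟨⟨β, hβδ⟩, hβC, hxβ.le⟩

theorem ClubIn.inter {C₁ C₂ : Set Ordinal} {δ : Ordinal} (hcof : Cardinal.aleph0 < δ.cof)
    (h₁ : ClubIn C₁ δ) (h₂ : ClubIn C₂ δ) : ClubIn (C₁ ∩ C₂) δ := by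
  have hcof' : Order.cof (Iio δ) ≠ Cardinal.aleph0 := by
    rw [Ordinal.cof_Iio, ← Ordinal.lift_cof]
    exact (Cardinal.aleph0_lt_lift.2 hcof).ne'
  have hlim : Order.IsSuccLimit δ := Ordinal.one_lt_cof_iff.1 (Cardinal.one_lt_aleph0.trans hcof)
  refine ⟨fun α hα => ?_, fun α hα₀ hαδ hcl => ⟨h₁.2 α hα₀ hαδ fun β hβ => ?_,
    h₂.2 α hα₀ hαδ fun β hβ => ?_⟩⟩
  · obtain ⟨β, hβC, hαβ⟩ :=
      (h₁.isClub.inter hcof' h₂.isClub).isCofinal ⟨Order.succ α, hlim.succ_lt hα⟩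
    exact ⟨β.1, hβC, Order.succ_le_iff.1 hαβ, β.2⟩
  · obtain ⟨γ, hγ, hβγ, hγα⟩ := hcl β hβ
    exact ⟨γ, hγ.1, hβγ, hγα⟩
  · obtain ⟨γ, hγ, hβγ, hγα⟩ := hcl β hβ
    exact ⟨γ, hγ.2, hβγ, hγα⟩

theorem Tenuous.union {S₁ S₂ : Set Ordinal} (h₁ : Tenuous S₁) (h₂ : Tenuous S₂) :
    Tenuous (S₁ ∪ S₂) := by
  intro δ hcof hstat
  have h₁ := h₁ δ hcof
  have h₂ := h₂ δ hcof
  simp only [StatIn, not_forall] at h₁ h₂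
  obtain ⟨C₁, hC₁, hS₁C₁⟩ := h₁
  obtain ⟨C₂, hC₂, hS₂C₂⟩ := h₂
  obtain ⟨x, ⟨hxS | hxS, hxδ⟩, hx₁, hx₂⟩ := hstat _ (hC₁.inter hcof hC₂)
  exacts [hS₁C₁ ⟨x, ⟨hxS, hxδ⟩, hx₁⟩, hS₂C₂ ⟨x, ⟨hxS, hxδ⟩, hx₂⟩]

theorem stmt17_general
    (θ : Ordinal → Cardinal)
    (Sstar : Set Ordinal)
    (succl : Ordinal → Prop) (rst Λst : Ordinal → Set Node)
    (qst : Ordinal → Node → Set Node)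
    (δ : Ordinal)
    (η : Node) (hη : η ∈ Ttree θ δ)
    (S₁ S₂ : Set Ordinal) (hS₁ : S₁ ⊆ Sstar ∩ Set.Iio δ) (hten₁ : Tenuous S₁)
    (hS₂ : S₂ ⊆ Sstar ∩ Set.Iio δ) (hten₂ : Tenuous S₂) :
    (pstar θ succl rst Λst qst δ η S₁ ∩ pstar θ succl rst Λst qst δ η S₂ =
      pstar θ succl rst Λst qst δ η (S₁ ∪ S₂)) ∧
    IsCondQ θ succl rst Λst qst Sstar δ
      (pstar θ succl rst Λst qst δ η S₁ ∩ pstar θ succl rst Λst qst δ η S₂) ∧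
    (pstar θ succl rst Λst qst δ η S₁ ∩ pstar θ succl rst Λst qst δ η S₂ ⊆
      pstar θ succl rst Λst qst δ η S₁) ∧
    (pstar θ succl rst Λst qst δ η S₁ ∩ pstar θ succl rst Λst qst δ η S₂ ⊆
      pstar θ succl rst Λst qst δ η S₂) ∧
    (∀ r, IsCondQ θ succl rst Λst qst Sstar δ r →
      r ⊆ pstar θ succl rst Λst qst δ η S₁ →
      r ⊆ pstar θ succl rst Λst qst δ η S₂ →
      r ⊆ pstar θ succl rst Λst qst δ η S₁ ∩ pstar θ succl rst Λst qst δ η S₂) := by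
  refine ⟨?_, ⟨η, hη, S₁ ∪ S₂, union_subset hS₁ hS₂, hten₁.union hten₂, ?_⟩,
    inter_subset_left, inter_subset_right, fun _ _ => subset_inter⟩ <;>
  exact pstar_inter_pstar (fun _ hx => (hS₁ hx).2) (fun _ hx => (hS₂ hx).2)

/-- for `p = p*_{η,δ,S₁}` and `q = p*_{η,δ,S₂}` with the
same trunk, `p ∩ q = p*_{η,δ,S₁∪S₂} ∈ Q_δ` is the least upper bound of
`p` and `q` in `Q_δ` (ordered by reverse inclusion). -/
theorem stmt17 (lamc : Cardinal) (hinacc : lamc.IsInaccessible)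
    (θ : Ordinal → Cardinal) (hθ : ∀ ε, 2 ≤ θ ε)
    (hθlt : ∀ ε < lamc.ord, (θ ε).ord < lamc.ord)
    (Sstar : Set Ordinal) (hSsub : Sstar ⊆ Set.Iio lamc.ord)
    (hSstat : StatIn Sstar lamc.ord)
    (hSsl : ∀ δ ∈ Sstar, (Ordinal.card δ).IsStrongLimit ∧ (Ordinal.card δ).ord = δ)
    (hSθ : ∀ δ ∈ Sstar, ∀ ζ < δ, (θ ζ).ord < δ)
    (hrefl : ∀ ε < lamc.ord, StatIn (Sstar ∩ Set.Iio ε) ε →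
      (Ordinal.card ε).IsInaccessible)
    (succl : Ordinal → Prop) (rst Λst : Ordinal → Set Node)
    (qst : Ordinal → Node → Set Node)
    (hsucc : ∀ δ₁, succl δ₁ → IsXi θ Sstar δ₁ (Λst δ₁) (qst δ₁) ∧
      rst δ₁ = ⋃ η ∈ Λst δ₁, qst δ₁ η)
    (δ : Ordinal) (hδ : δ ∈ Sstar ∨ δ = lamc.ord)
    (η : Node) (hη : η ∈ Ttree θ δ)
    (S₁ S₂ : Set Ordinal) (hS₁ : S₁ ⊆ Sstar ∩ Set.Iio δ) (hten₁ : Tenuous S₁)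
    (hS₂ : S₂ ⊆ Sstar ∩ Set.Iio δ) (hten₂ : Tenuous S₂) :
    (pstar θ succl rst Λst qst δ η S₁ ∩ pstar θ succl rst Λst qst δ η S₂ =
      pstar θ succl rst Λst qst δ η (S₁ ∪ S₂)) ∧
    IsCondQ θ succl rst Λst qst Sstar δ
      (pstar θ succl rst Λst qst δ η S₁ ∩ pstar θ succl rst Λst qst δ η S₂) ∧
    (pstar θ succl rst Λst qst δ η S₁ ∩ pstar θ succl rst Λst qst δ η S₂ ⊆
      pstar θ succl rst Λst qst δ η S₁) ∧
    (pstar θ succl rst Λst qst δ η S₁ ∩ pstar θ succl rst Λst qst δ η S₂ ⊆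
      pstar θ succl rst Λst qst δ η S₂) ∧
    (∀ r, IsCondQ θ succl rst Λst qst Sstar δ r →
      r ⊆ pstar θ succl rst Λst qst δ η S₁ →
      r ⊆ pstar θ succl rst Λst qst δ η S₂ →
      r ⊆ pstar θ succl rst Λst qst δ η S₁ ∩ pstar θ succl rst Λst qst δ η S₂) :=
  stmt17_general θ Sstar succl rst Λst qst δ η hη S₁ S₂ hS₁ hten₁ hS₂ hten₂

end RRF
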